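/- arXiv:1603.03892 — 2 statements merged into one kernel-verified Lean document; each statement's English description precedes it below -/
import Mathlib

section
/- Let (G, τ) be a topological abelian group, H an open subgroup, and ν a metrizable locally quasi-convex group topology on H which is not Mackey. Then the extension ν̄ to G is a metrizable locally quasi-convex group topology on G which is not Mackey. -/
/-! The extension `νb` has the image of the `ν`-neighbourhood filter of `0` as its neighbourhood
filter of `0`. Hence it is first countable and Hausdorff, so metrizable (Birkhoff–Kakutani), it
induces `ν` on `H`, and its continuous characters are exactly the characters of `G` whose
restriction to `H` is `ν`-continuous. Since `ℝ/ℤ` is divisible, every character of `H` extends to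
`G` and characters of `G/H` separate the points outside `H` from `H`; so images of `ν`-quasi-convex
sets are `νb`-quasi-convex. Finally, a compatible locally quasi-convex topology on `H` that is not
coarser than `ν` extends to one on `G` that is compatible with `νb` and, restricting back to `H`,
not coarser than `νb`. -/

open scoped Topology
open Filter

noncomputable section

abbrev Circle1 : Type := AddCircle (1 : ℝ)

def Tpos : Set Circle1 := (fun r : ℝ => (r : Circle1)) '' Set.Icc (-(1/4) : ℝ) (1/4)

variable {G : Type*}

def IsChar [AddCommGroup G] (τ : TopologicalSpace G) (φ : G →+ Circle1) : Prop :=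
  @Continuous G Circle1 τ _ φ

def QuasiConvex [AddCommGroup G] (τ : TopologicalSpace G) (M : Set G) : Prop :=
  ∀ x ∉ M, ∃ φ : G →+ Circle1, IsChar τ φ ∧ (∀ y ∈ M, φ y ∈ Tpos) ∧ φ x ∉ Tpos

def LocallyQuasiConvex [AddCommGroup G] (τ : TopologicalSpace G) : Prop :=
  ∀ U ∈ @nhds G τ 0, ∃ M ∈ @nhds G τ 0, QuasiConvex τ M ∧ M ⊆ U

def Compatible [AddCommGroup G] (τ τ' : TopologicalSpace G) : Prop :=
  ∀ φ : G →+ Circle1, IsChar τ φ ↔ IsChar τ' φ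

def IsMackey [AddCommGroup G] (τ : TopologicalSpace G) : Prop :=
  @IsTopologicalAddGroup G τ _ ∧ LocallyQuasiConvex τ ∧
    ∀ τ' : TopologicalSpace G, @IsTopologicalAddGroup G τ' _ →
      LocallyQuasiConvex τ' → Compatible τ τ' → τ ≤ τ'

def BoundedGroup (G : Type*) [AddCommGroup G] : Prop :=
  ∃ m : ℕ, 0 < m ∧ ∀ x : G, m • x = 0

def Precompact [AddCommGroup G] (τ : TopologicalSpace G) : Prop :=
  ∀ U ∈ @nhds G τ 0, ∃ F : Finset G, ∀ x : G, ∃ f ∈ F, x - f ∈ U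

def LinearTop [AddCommGroup G] (τ : TopologicalSpace G) : Prop :=
  ∀ U ∈ @nhds G τ 0, ∃ H : AddSubgroup G, @IsOpen G τ (H : Set G) ∧ (H : Set G) ⊆ U

def DuallyClosed [AddCommGroup G] (τ : TopologicalSpace G) (H : AddSubgroup G) : Prop :=
  ∀ x : G, x ∉ H → ∃ φ : G →+ Circle1, IsChar τ φ ∧ (∀ h ∈ H, φ h = 0) ∧ φ x ≠ 0

def WeakTop [AddCommGroup G] (τ : TopologicalSpace G) : TopologicalSpace G :=
  ⨅ φ : {φ : G →+ Circle1 // IsChar τ φ}, TopologicalSpace.induced φ.1 inferInstance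

/-- `νb` is the extension of the topology `ν` on the subgroup `H` to all of `G`. -/
def ExtBasis {G : Type*} [AddCommGroup G] (H : AddSubgroup G) (ν : TopologicalSpace H)
    (νb : TopologicalSpace G) : Prop :=
  (@nhds G νb 0).HasBasis (fun V : Set H => V ∈ @nhds H ν 0)
    (fun V => Subtype.val '' V)


lemma zero_mem_Tpos : (0 : Circle1) ∈ Tpos :=
  ⟨0, by norm_num, by norm_num⟩

lemma coe_notMem_Tpos {r : ℝ} (h₁ : 1 / 4 < r) (h₂ : r < 3 / 4) : (r : Circle1) ∉ Tpos := by
  rintro ⟨s, ⟨hs₁, hs₂⟩, hsr⟩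
  have := (AddCircle.coe_eq_coe_iff_of_mem_Ico (p := (1 : ℝ)) (a := -(1 / 4))
    ⟨hs₁, by linarith⟩ ⟨by linarith, by linarith⟩).mp hsr
  linarith

lemma exists_notMem_Tpos_nsmul_eq_zero {n : ℕ} (hn : n ≠ 1) :
    ∃ c : Circle1, c ∉ Tpos ∧ n • c = 0 := by
  obtain rfl | hn₂ : n = 0 ∨ 2 ≤ n := by omega
  · exact ⟨((1 / 2 : ℝ) : Circle1), coe_notMem_Tpos (by norm_num) (by norm_num), zero_nsmul _⟩
  · have hn₀ : (0 : ℝ) < n := by positivity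
    refine ⟨(((n / 2 : ℕ) : ℝ) / n : ℝ), coe_notMem_Tpos ?_ ?_, ?_⟩
    · rw [lt_div_iff₀ hn₀]
      have : (n : ℝ) < 4 * (n / 2 : ℕ) := by exact_mod_cast (by omega : n < 4 * (n / 2))
      linarith
    · rw [div_lt_iff₀ hn₀]
      have : 4 * ((n / 2 : ℕ) : ℝ) < 3 * n := by
        exact_mod_cast (by omega : 4 * (n / 2) < 3 * n)
      linarith
    · rw [← AddCircle.coe_nsmul, nsmul_eq_mul, mul_div_cancel₀ _ hn₀.ne',
        AddCircle.coe_eq_zero_iff]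
      exact ⟨(n / 2 : ℕ), by rw [zsmul_one, Int.cast_natCast]⟩

lemma exists_addMonoidHom_apply_eq {Q D : Type*} [AddCommGroup Q] [AddCommGroup D]
    [DivisibleBy D ℤ] (a : Q) {c : D} (hc : addOrderOf a • c = 0) :
    ∃ ψ : Q →+ D, ψ a = c := by
  set f := zmultiplesHom Q a
  have hker : f.rangeRestrict.ker ≤ (zmultiplesHom D c).ker := by
    intro k hk
    rw [AddMonoidHom.ker_rangeRestrict] at hk
    obtain ⟨m, rfl⟩ := addOrderOf_dvd_iff_zsmul_eq_zero.mpr hk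
    simp [mul_comm, mul_zsmul, natCast_zsmul, hc]
  set χ := f.rangeRestrict.liftOfRightInverse _
    (Function.rightInverse_surjInv f.rangeRestrict_surjective) ⟨_, hker⟩
  obtain ⟨ψ, hψ⟩ := (Module.Baer.of_divisible D).extension_property_addMonoidHom
    f.range.subtype f.range.subtype_injective χ
  refine ⟨ψ, ?_⟩
  calc ψ a = ψ (f.range.subtype (f.rangeRestrict 1)) := by
        rw [f.range.subtype_apply, f.coe_rangeRestrict, zmultiplesHom_apply, one_zsmul]
    _ = χ (f.rangeRestrict 1) := by rw [← hψ, AddMonoidHom.comp_apply]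
    _ = c := by simp [χ, AddMonoidHom.liftOfRightInverse_comp_apply]

lemma exists_addMonoidHom_apply_notMem_Tpos {Q : Type*} [AddCommGroup Q] {a : Q} (ha : a ≠ 0) :
    ∃ ψ : Q →+ Circle1, ψ a ∉ Tpos := by
  obtain ⟨c, hc, hac⟩ :=
    exists_notMem_Tpos_nsmul_eq_zero (mt AddMonoid.addOrderOf_eq_one_iff.mp ha)
  obtain ⟨ψ, rfl⟩ := exists_addMonoidHom_apply_eq a hac
  exact ⟨ψ, hc⟩

lemma AddSubgroup.exists_addMonoidHom_eq_zero_and_apply_notMem_Tpos [AddCommGroup G]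
    {H : AddSubgroup G} {x : G} (hx : x ∉ H) :
    ∃ φ : G →+ Circle1, (∀ h ∈ H, φ h = 0) ∧ φ x ∉ Tpos := by
  obtain ⟨ψ, hψ⟩ := exists_addMonoidHom_apply_notMem_Tpos
    (mt (QuotientAddGroup.eq_zero_iff x).mp hx)
  exact ⟨ψ.comp (QuotientAddGroup.mk' H),
    fun h hh => by simp [(QuotientAddGroup.eq_zero_iff h).mpr hh], hψ⟩

lemma IsTopologicalAddGroup.le_of_nhds_zero_le [AddGroup G] {t t' : TopologicalSpace G}
    (tg : @IsTopologicalAddGroup G t _) (tg' : @IsTopologicalAddGroup G t' _)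
    (h : @nhds G t 0 ≤ @nhds G t' 0) : t ≤ t' :=
  le_of_nhds_le_nhds fun x => by
    rw [← @map_add_left_nhds_zero G t _ tg x, ← @map_add_left_nhds_zero G t' _ tg' x]
    exact map_mono h

lemma IsTopologicalAddGroup.metrizableSpace [AddCommGroup G] [TopologicalSpace G]
    [IsTopologicalAddGroup G] [T0Space G] [(𝓝 (0 : G)).IsCountablyGenerated] :
    TopologicalSpace.MetrizableSpace G := by
  let _ : UniformSpace G := IsTopologicalAddGroup.rightUniformSpace G
  have : IsUniformAddGroup G := isUniformAddGroup_of_addCommGroup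
  have : (uniformity G).IsCountablyGenerated := by
    rw [uniformity_eq_comap_nhds_zero G]
    infer_instance
  exact UniformSpace.metrizableSpace

lemma AddSubgroup.exists_extBasis [AddCommGroup G] (H : AddSubgroup G) (σ : TopologicalSpace H)
    (hσ : @IsTopologicalAddGroup H σ _) :
    ∃ νb : TopologicalSpace G, @IsTopologicalAddGroup G νb _ ∧ ExtBasis H σ νb := by
  let _ := σ
  set F := Filter.map Subtype.val (𝓝 (0 : H))
  let B : AddGroupFilterBasis G := addGroupFilterBasisOfComm F.sets ⟨_, univ_mem⟩
    (fun _ _ hU hV => ⟨_, inter_mem hU hV, subset_rfl⟩)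
    (fun _ hU => (mem_of_mem_nhds hU : (0 : H) ∈ Subtype.val ⁻¹' _))
    (fun U hU => by
      obtain ⟨W, hW, hWU⟩ := exists_nhds_zero_half (s := Subtype.val ⁻¹' U) hU
      refine ⟨_, image_mem_map hW, ?_⟩
      rintro _ ⟨_, ⟨a, ha, rfl⟩, _, ⟨b, hb, rfl⟩, rfl⟩
      exact hWU a ha b hb)
    (fun _ hU => ⟨_, neg_mem_nhds_zero H hU, subset_rfl⟩)
  have hBF : B.filter = F := Filter.ext fun s => (FilterBasis.mem_filter_iff _).trans
    ⟨fun ⟨t, ht, hts⟩ => mem_of_superset ht hts, fun hs => ⟨s, hs, subset_rfl⟩⟩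
  refine ⟨B.topology, B.isTopologicalAddGroup, ?_⟩
  rw [ExtBasis, B.nhds_zero_eq, hBF]
  exact (basis_sets _).map _

namespace ExtBasis

variable [AddCommGroup G] {H : AddSubgroup G} {σ σ' : TopologicalSpace H}
  {νb νb' : TopologicalSpace G}

lemma nhds_zero_eq (hb : ExtBasis H σ νb) :
    @nhds G νb 0 = map Subtype.val (@nhds H σ 0) :=
  hb.eq_of_same_basis ((basis_sets _).map _)

lemma nhds_zero_eq_comap (hb : ExtBasis H σ νb) :
    @nhds H σ 0 = comap Subtype.val (@nhds G νb 0) := by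
  rw [hb.nhds_zero_eq, comap_map Subtype.val_injective]

lemma le_of_le (hσ : @IsTopologicalAddGroup H σ _) (hσ' : @IsTopologicalAddGroup H σ' _)
    (hb : ExtBasis H σ νb) (hb' : ExtBasis H σ' νb') (hle : νb ≤ νb') : σ ≤ σ' :=
  hσ.le_of_nhds_zero_le hσ' <| by
    rw [hb.nhds_zero_eq_comap, hb'.nhds_zero_eq_comap]
    exact comap_mono (@nhds_mono G νb νb' 0 hle)

lemma isChar_iff (hσ : @IsTopologicalAddGroup H σ _) (hνb : @IsTopologicalAddGroup G νb _)
    (hb : ExtBasis H σ νb) (φ : G →+ Circle1) :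
    IsChar νb φ ↔ IsChar σ (φ.comp H.subtype) := by
  let _ := σ; let _ := νb
  constructor
  · intro h
    have hval : Continuous H.subtype := continuous_of_continuousAt_zero H.subtype <| by
      simp only [ContinuousAt, map_zero, hb.nhds_zero_eq]
      exact tendsto_map
    exact h.comp hval
  · intro h
    refine continuous_of_continuousAt_zero φ ?_
    simpa [ContinuousAt, hb.nhds_zero_eq, tendsto_map'_iff] using h.tendsto 0

lemma compatible (hσ : @IsTopologicalAddGroup H σ _) (hσ' : @IsTopologicalAddGroup H σ' _)
    (hνb : @IsTopologicalAddGroup G νb _) (hνb' : @IsTopologicalAddGroup G νb' _)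
    (hb : ExtBasis H σ νb) (hb' : ExtBasis H σ' νb') (h : Compatible σ σ') :
    Compatible νb νb' := fun φ => by
  rw [hb.isChar_iff hσ hνb, hb'.isChar_iff hσ' hνb']
  exact h _

lemma quasiConvex_image_val (hσ : @IsTopologicalAddGroup H σ _)
    (hνb : @IsTopologicalAddGroup G νb _) (hb : ExtBasis H σ νb) {M : Set H}
    (hM : QuasiConvex σ M) : QuasiConvex νb (Subtype.val '' M) := by
  intro x hx
  by_cases hxH : x ∈ H
  · obtain ⟨χ, hχ, hχM, hχx⟩ := hM ⟨x, hxH⟩ fun h => hx ⟨_, h, rfl⟩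
    obtain ⟨φ, rfl⟩ := (Module.Baer.of_divisible Circle1).extension_property_addMonoidHom
      H.subtype H.subtype_injective χ
    refine ⟨φ, (hb.isChar_iff hσ hνb φ).mpr hχ, ?_, hχx⟩
    rintro _ ⟨m, hm, rfl⟩
    exact hχM m hm
  · obtain ⟨φ, hφH, hφx⟩ := H.exists_addMonoidHom_eq_zero_and_apply_notMem_Tpos hxH
    have hφ : φ.comp H.subtype = 0 := AddMonoidHom.ext fun h => hφH h h.2
    refine ⟨φ, (hb.isChar_iff hσ hνb φ).mpr ?_, ?_, hφx⟩
    · rw [hφ]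
      exact @continuous_const H Circle1 σ _ 0
    · rintro _ ⟨m, -, rfl⟩
      rw [hφH _ m.2]
      exact zero_mem_Tpos

lemma locallyQuasiConvex (hσ : @IsTopologicalAddGroup H σ _) (hσlqc : LocallyQuasiConvex σ)
    (hνb : @IsTopologicalAddGroup G νb _) (hb : ExtBasis H σ νb) :
    LocallyQuasiConvex νb := by
  intro U hU
  obtain ⟨V, hV, hVU⟩ := hb.mem_iff.mp hU
  obtain ⟨M, hM, hMqc, hMV⟩ := hσlqc V hV
  exact ⟨_, hb.mem_of_mem hM, hb.quasiConvex_image_val hσ hνb hMqc,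
    (Set.image_mono hMV).trans hVU⟩

lemma metrizableSpace (hσ : @TopologicalSpace.MetrizableSpace H σ)
    (hνb : @IsTopologicalAddGroup G νb _) (hb : ExtBasis H σ νb) :
    @TopologicalSpace.MetrizableSpace G νb := by
  let _ := σ; let _ := νb
  have : T2Space G := IsTopologicalAddGroup.t2Space_of_zero_sep fun x hx => by
    have hclosed : IsClosed (Subtype.val ⁻¹' {x} : Set H) :=
      (Set.subsingleton_singleton.preimage Subtype.val_injective).finite.isClosed
    refine ⟨_, hb.mem_of_mem (hclosed.isOpen_compl.mem_nhds (Ne.symm hx)), ?_⟩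
    rintro ⟨y, hy, rfl⟩
    exact hy rfl
  have : (𝓝 (0 : G)).IsCountablyGenerated := by
    rw [hb.nhds_zero_eq]
    infer_instance
  exact IsTopologicalAddGroup.metrizableSpace

lemma not_isMackey (hσ : @IsTopologicalAddGroup H σ _)
    (hσlqc : LocallyQuasiConvex σ) (hσM : ¬ IsMackey σ) (hνb : @IsTopologicalAddGroup G νb _)
    (hb : ExtBasis H σ νb) : ¬ IsMackey νb := by
  rintro ⟨-, -, hfinest⟩
  refine hσM ⟨hσ, hσlqc, fun σ' hσ' hσ'lqc hcompat => ?_⟩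
  obtain ⟨νb', hνb', hb'⟩ := H.exists_extBasis σ' hσ'
  exact hb.le_of_le hσ hσ' hb' <| hfinest νb' hνb' (hb'.locallyQuasiConvex hσ' hσ'lqc hνb')
    (hb.compatible hσ hσ' hνb hνb' hb' hcompat)

end ExtBasis

theorem stmt11_general {G : Type*} [AddCommGroup G] (H : AddSubgroup G) (ν : TopologicalSpace H)
    (hνg : @IsTopologicalAddGroup H ν _) (hνmet : @TopologicalSpace.MetrizableSpace H ν)
    (hνlqc : LocallyQuasiConvex ν) (hνnM : ¬ IsMackey ν) :
    ∀ νb : TopologicalSpace G, @IsTopologicalAddGroup G νb _ → ExtBasis H ν νb →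
      @TopologicalSpace.MetrizableSpace G νb ∧ LocallyQuasiConvex νb ∧ ¬ IsMackey νb :=
  fun _ hνb hb => ⟨hb.metrizableSpace hνmet hνb, hb.locallyQuasiConvex hνg hνlqc hνb,
    hb.not_isMackey hνg hνlqc hνnM hνb⟩

theorem stmt11 {G : Type*} [AddCommGroup G] (τ : TopologicalSpace G)
    (htg : @IsTopologicalAddGroup G τ _) (H : AddSubgroup G)
    (hopen : @IsOpen G τ (H : Set G)) (ν : TopologicalSpace H)
    (hνg : @IsTopologicalAddGroup H ν _) (hνmet : @TopologicalSpace.MetrizableSpace H ν)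
    (hνlqc : LocallyQuasiConvex ν) (hνnM : ¬ IsMackey ν) :
    ∀ νb : TopologicalSpace G, @IsTopologicalAddGroup G νb _ → ExtBasis H ν νb →
      @TopologicalSpace.MetrizableSpace G νb ∧ LocallyQuasiConvex νb ∧ ¬ IsMackey νb :=
  stmt11_general H ν hνg hνmet hνlqc hνnM
end
end

section
/- Let (G, τ) and τ' be compatible group topologies on a bounded abelian group G, and H ≤ G a τ-open subgroup. Then every τ|_H-continuous character of H is τ'|_H-continuous and conversely; that is, τ|_H and τ'|_H are compatible topologies on H. -/
open scoped Topology
open Filter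

noncomputable section

variable {G : Type*}

/-! In a bounded group a locally quasi-convex topology is linear: if `m • G = 0`, the points all of
whose multiples lie in a quasi-convex neighbourhood `M` of `0` form a neighbourhood of `0`, and the
subgroup they generate stays in `M`, because the only subgroup of the circle inside `Tpos` is trivial.
Hence a continuous character `χ` of `H` vanishes on `H ∩ U` for some open subgroup `U`; it factors
through `H ⧸ (H ∩ U) ↪ G ⧸ U` and so extends, the circle being divisible, to a character of `G`
vanishing on `U`. That character is `τ`-continuous, hence `τ'`-continuous, and restricts to `χ`. -/

lemma Circle1.exists_coe_eq_and_abs_eq_norm (t : Circle1) :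
    ∃ r : ℝ, (r : Circle1) = t ∧ |r| = ‖t‖ := by
  induction t using QuotientAddGroup.induction_on with
  | H x => exact ⟨x - round x, by simp, by simp [UnitAddCircle.norm_eq]⟩

lemma Tpos_eq_closedBall : Tpos = Metric.closedBall 0 (1 / 4) := by
  ext t
  constructor
  · rintro ⟨r, hIcc, rfl⟩
    have hr : |r| ≤ 1 / 4 := abs_le.2 hIcc
    have hr2 : |r| ≤ |(1 : ℝ)| / 2 := by norm_num; linarith
    rw [mem_closedBall_zero_iff]
    exact (AddCircle.norm_coe_eq_abs_iff _ one_ne_zero |>.2 hr2).trans_le hr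
  · intro ht
    obtain ⟨r, rfl, hr⟩ := Circle1.exists_coe_eq_and_abs_eq_norm t
    exact ⟨r, abs_le.1 (hr ▸ mem_closedBall_zero_iff.1 ht), rfl⟩

lemma eq_zero_of_forall_nsmul_mem_Tpos {t : Circle1} (h : ∀ n : ℕ, n • t ∈ Tpos) : t = 0 := by
  simp only [Tpos_eq_closedBall, mem_closedBall_zero_iff] at h
  obtain ⟨r, rfl, hr⟩ := Circle1.exists_coe_eq_and_abs_eq_norm t
  have hr1 : |r| ≤ 1 / 4 := by simpa [hr] using h 1
  -- A step of length `|r| ≤ 1/4` cannot jump from `[0, 1/4]` over `(1/4, 1/2]`, where the norm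
  -- of the circle is still the absolute value.
  have hmul : ∀ n : ℕ, n * |r| ≤ 1 / 4 := by
    intro n
    induction n with
    | zero => norm_num
    | succ n ih =>
      have hle : |(n + 1 : ℕ) * r| ≤ |(1 : ℝ)| / 2 := by
        rw [abs_mul, Nat.abs_cast]; push_cast; norm_num; linarith
      have := h (n + 1)
      rwa [← AddCircle.coe_nsmul, nsmul_eq_mul,
        AddCircle.norm_coe_eq_abs_iff _ one_ne_zero |>.2 hle, abs_mul, Nat.abs_cast] at this
  obtain hr0 | hr0 := (abs_nonneg r).eq_or_lt
  · simp [abs_eq_zero.1 hr0.symm]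
  · obtain ⟨n, hn⟩ := Archimedean.arch (1 / 2 : ℝ) hr0
    rw [nsmul_eq_mul] at hn
    linarith [hmul n]

section LinearTopology

variable [AddCommGroup G] {τ : TopologicalSpace G}

lemma QuasiConvex.addSubgroupClosure_subset {M S : Set G} (hM : QuasiConvex τ M)
    (hS : ∀ x ∈ S, ∀ n : ℕ, n • x ∈ M) : (AddSubgroup.closure S : Set G) ⊆ M := by
  intro y hy
  by_contra hyM
  obtain ⟨φ, -, hφM, hφy⟩ := hM y hyM
  have hker : AddSubgroup.closure S ≤ φ.ker := AddSubgroup.closure_le _ |>.2 fun x hx =>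
    eq_zero_of_forall_nsmul_mem_Tpos fun n => map_nsmul φ n x ▸ hφM _ (hS x hx n)
  exact hφy (hker hy ▸ zero_mem_Tpos)

lemma BoundedGroup.setOf_forall_nsmul_mem_mem_nhds [IsTopologicalAddGroup G] (hb : BoundedGroup G)
    {M : Set G} (hM : M ∈ 𝓝 0) : {x : G | ∀ n : ℕ, n • x ∈ M} ∈ 𝓝 0 := by
  obtain ⟨m, hm, hmx⟩ := hb
  have hfin : ⋂ j ∈ Finset.range m, (j • · : G → G) ⁻¹' M ∈ 𝓝 0 :=
    (Filter.biInter_finset_mem _).2 fun j _ =>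
      (continuous_nsmul j).continuousAt.preimage_mem_nhds (by simpa using hM)
  refine mem_of_superset hfin fun x hx n => ?_
  rw [← Nat.mod_add_div n m, add_smul, mul_smul, hmx, add_zero]
  exact Set.mem_iInter₂.1 hx _ (Finset.mem_range.2 (Nat.mod_lt _ hm))

lemma BoundedGroup.linearTop [IsTopologicalAddGroup G] (hb : BoundedGroup G)
    (hlqc : LocallyQuasiConvex τ) : LinearTop τ := by
  intro U hU
  obtain ⟨M, hM, hqc, hMU⟩ := hlqc U hU
  refine ⟨AddSubgroup.closure {x | ∀ n : ℕ, n • x ∈ M}, ?_, ?_⟩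
  · exact AddSubgroup.isOpen_of_mem_nhds _
      (mem_of_superset (hb.setOf_forall_nsmul_mem_mem_nhds hM) AddSubgroup.subset_closure)
  · exact (hqc.addSubgroupClosure_subset fun _ hx => hx).trans hMU

lemma LinearTop.exists_isOpen_addSubgroup_vanishing (hlin : LinearTop τ) {H : AddSubgroup G}
    (χ : H →+ Circle1) (hχ : Continuous χ) :
    ∃ U : AddSubgroup G, IsOpen (U : Set G) ∧ ∀ h : H, (h : G) ∈ U → χ h = 0 := by
  have hT : χ ⁻¹' Tpos ∈ 𝓝 0 := hχ.continuousAt.preimage_mem_nhds <| by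
    rw [map_zero, Tpos_eq_closedBall]; exact Metric.closedBall_mem_nhds _ (by norm_num)
  rw [nhds_subtype, AddSubgroup.coe_zero, mem_comap] at hT
  obtain ⟨V, hV, hVT⟩ := hT
  obtain ⟨U, hU, hUV⟩ := hlin V hV
  refine ⟨U, hU, fun h hh => eq_zero_of_forall_nsmul_mem_Tpos fun n => ?_⟩
  rw [← map_nsmul]
  exact hVT (hUV (U.nsmul_mem hh n))

end LinearTopology

lemma AddMonoidHom.exists_comp_eq_of_ker_le {A B Q : Type*} [AddCommGroup A] [AddCommGroup B]
    [AddCommGroup Q] [DivisibleBy Q ℤ] (f : A →+ B) (g : A →+ Q) (h : f.ker ≤ g.ker) :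
    ∃ ψ : B →+ Q, ψ.comp f = g := by
  obtain ⟨ψ, hψ⟩ := (Module.Baer.of_divisible Q).extension_property_addMonoidHom
    (QuotientAddGroup.kerLift f) (QuotientAddGroup.kerLift_injective f)
    (QuotientAddGroup.lift f.ker g h)
  exact ⟨ψ, AddMonoidHom.ext fun a => by simpa using DFunLike.congr_fun hψ (a : A ⧸ f.ker)⟩

lemma AddSubgroup.exists_extension_of_le_ker {Q : Type*} [AddCommGroup G] [AddCommGroup Q]
    [DivisibleBy Q ℤ] {H U : AddSubgroup G} (χ : H →+ Q) (hχ : ∀ h : H, (h : G) ∈ U → χ h = 0) :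
    ∃ φ : G →+ Q, φ.comp H.subtype = χ ∧ U ≤ φ.ker := by
  obtain ⟨ψ, hψ⟩ := ((QuotientAddGroup.mk' U).comp H.subtype).exists_comp_eq_of_ker_le χ
    fun h hh => hχ h (by simpa using hh)
  refine ⟨ψ.comp (QuotientAddGroup.mk' U), hψ, fun u hu => ?_⟩
  simp [(QuotientAddGroup.eq_zero_iff u).2 hu]

lemma AddMonoidHom.continuous_of_isOpen_le_ker {M : Type*} [AddCommGroup G] [TopologicalSpace G]
    [IsTopologicalAddGroup G] [AddMonoid M] [TopologicalSpace M] [ContinuousAdd M]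
    (φ : G →+ M) {U : AddSubgroup G} (hU : IsOpen (U : Set G)) (hUφ : U ≤ φ.ker) :
    Continuous φ :=
  continuous_of_continuousAt_zero φ <| continuousAt_const.congr <|
    mem_of_superset (hU.mem_nhds U.zero_mem) fun _ hu => (hUφ hu).symm

lemma LinearTop.exists_continuous_extension [AddCommGroup G] {τ : TopologicalSpace G}
    [IsTopologicalAddGroup G] (hlin : LinearTop τ) {H : AddSubgroup G} (χ : H →+ Circle1)
    (hχ : Continuous χ) : ∃ φ : G →+ Circle1, Continuous φ ∧ φ.comp H.subtype = χ := by
  obtain ⟨U, hU, hχU⟩ := hlin.exists_isOpen_addSubgroup_vanishing χ hχ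
  obtain ⟨φ, hφχ, hUφ⟩ := AddSubgroup.exists_extension_of_le_ker χ hχU
  exact ⟨φ, φ.continuous_of_isOpen_le_ker hU hUφ, hφχ⟩

theorem stmt13_general {G : Type*} [AddCommGroup G] (hb : BoundedGroup G)
    (τ τ' : TopologicalSpace G)
    (htg : @IsTopologicalAddGroup G τ _) (htg' : @IsTopologicalAddGroup G τ' _)
    (hlqc : LocallyQuasiConvex τ) (hlqc' : LocallyQuasiConvex τ')
    (hcomp : Compatible τ τ')
    (H : AddSubgroup G) :
    Compatible (TopologicalSpace.induced (Subtype.val : H → G) τ)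
      (TopologicalSpace.induced (Subtype.val : H → G) τ') := by
  intro χ
  have transfer : ∀ {σ σ' : TopologicalSpace G}, @IsTopologicalAddGroup G σ _ →
      LocallyQuasiConvex σ → (∀ φ, IsChar σ φ → IsChar σ' φ) →
      IsChar (σ.induced Subtype.val) χ → IsChar (σ'.induced Subtype.val) χ := by
    intro σ σ' _ hσ hchar hχ
    obtain ⟨φ, hφ, rfl⟩ := (hb.linearTop hσ).exists_continuous_extension χ hχ
    exact (hchar φ hφ).comp continuous_induced_dom
  exact ⟨transfer htg hlqc (hcomp · |>.1), transfer htg' hlqc' (hcomp · |>.2)⟩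

theorem stmt13 {G : Type*} [AddCommGroup G] (hb : BoundedGroup G)
    (τ τ' : TopologicalSpace G)
    (htg : @IsTopologicalAddGroup G τ _) (htg' : @IsTopologicalAddGroup G τ' _)
    (hlqc : LocallyQuasiConvex τ) (hlqc' : LocallyQuasiConvex τ')
    (hcomp : Compatible τ τ')
    (H : AddSubgroup G) (hopen : @IsOpen G τ (H : Set G)) :
    Compatible (TopologicalSpace.induced (Subtype.val : H → G) τ)
      (TopologicalSpace.induced (Subtype.val : H → G) τ') :=
  stmt13_general hb τ τ' htg htg' hlqc hlqc' hcomp H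
end
end
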